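/- Let A be an n×n real symmetric matrix whose off-diagonal entries are all nonnegative. Suppose φ : [0, ∞) → ℝⁿ solves the linear ODE φ'(t) = A·φ(t), with φ(t) entrywise strictly positive for all t ≥ 0 and sup_{t ≥ 0} |φ(t)| < ∞. Then the largest eigenvalue of A is at most 0. -/

import Mathlib

/-!
If `μ > 0` were an eigenvalue with eigenvector `v`, the nonnegativity of the off-diagonal entries
gives `μ • |v| ≤ A *ᵥ |v|`. Pairing with the positive solution, `g t = φ t ⬝ᵥ |v|` satisfies
`g' = φ ⬝ᵥ (A *ᵥ |v|) ≥ μ g` because `A` is symmetric, so `g t ≥ exp (μ t) * g 0` with `g 0 > 0`,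
contradicting the boundedness of `φ`.
-/

open Matrix Real Filter Set

namespace Matrix

variable {ι R : Type*} [Fintype ι] [CommRing R] [LinearOrder R] [IsStrictOrderedRing R]
  {A : Matrix ι ι R}

theorem mulVec_apply_le_mulVec_abs_apply (hoff : ∀ i j, i ≠ j → 0 ≤ A i j) {v : ι → R} {i : ι}
    (hvi : 0 ≤ v i) : (A *ᵥ v) i ≤ (A *ᵥ |v|) i := by
  refine Finset.sum_le_sum fun j _ => ?_
  rcases eq_or_ne i j with rfl | hij
  · simp [abs_of_nonneg hvi]
  · exact mul_le_mul_of_nonneg_left (le_abs_self _) (hoff i j hij)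

theorem smul_abs_le_mulVec_abs (hoff : ∀ i j, i ≠ j → 0 ≤ A i j) {μ : R} {v : ι → R}
    (hv : A *ᵥ v = μ • v) : μ • |v| ≤ A *ᵥ |v| := by
  intro i
  rcases le_total 0 (v i) with hvi | hvi
  · calc (μ • |v|) i = (A *ᵥ v) i := by simp [hv, abs_of_nonneg hvi]
      _ ≤ (A *ᵥ |v|) i := mulVec_apply_le_mulVec_abs_apply hoff hvi
  · calc (μ • |v|) i = (A *ᵥ -v) i := by simp [mulVec_neg, hv, abs_of_nonpos hvi]
      _ ≤ (A *ᵥ |-v|) i := mulVec_apply_le_mulVec_abs_apply hoff (by simpa using hvi)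
      _ = (A *ᵥ |v|) i := by rw [abs_neg]

end Matrix

theorem HasDerivAt.dotProduct_const {ι : Type*} [Fintype ι] {φ : ℝ → ι → ℝ} {φ' : ι → ℝ} {t : ℝ}
    (hφ : HasDerivAt φ φ' t) (w : ι → ℝ) : HasDerivAt (fun s => φ s ⬝ᵥ w) (φ' ⬝ᵥ w) t :=
  HasDerivAt.fun_sum fun i _ => (hasDerivAt_pi.mp hφ i).mul_const (w i)

theorem dotProduct_le_norm_mul_sum_abs {ι : Type*} [Fintype ι] (x w : ι → ℝ) :
    x ⬝ᵥ w ≤ ‖x‖ * ∑ i, |w i| := by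
  rw [Finset.mul_sum]
  refine Finset.sum_le_sum fun i _ => ?_
  calc x i * w i ≤ |x i| * |w i| := by rw [← abs_mul]; exact le_abs_self _
    _ ≤ ‖x‖ * |w i| := mul_le_mul_of_nonneg_right (norm_le_pi_norm x i) (abs_nonneg _)

theorem exp_mul_mul_le_of_mul_le_deriv {g g' : ℝ → ℝ} {μ : ℝ}
    (hg : ∀ t ≥ 0, HasDerivAt g (g' t) t) (hle : ∀ t ≥ 0, μ * g t ≤ g' t) {t : ℝ} (ht : 0 ≤ t) :
    exp (μ * t) * g 0 ≤ g t := by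
  have hderiv : ∀ s ≥ 0, HasDerivAt (fun s => exp (-(μ * s)) * g s)
      (exp (-(μ * s)) * (g' s - μ * g s)) s := fun s hs =>
    (((((hasDerivAt_id' s).const_mul μ).fun_neg).exp).mul (hg s hs)).congr_deriv (by ring)
  have hmono : MonotoneOn (fun s => exp (-(μ * s)) * g s) (Ici 0) := by
    refine monotoneOn_of_hasDerivWithinAt_nonneg (convex_Ici 0)
      (fun s hs => (hderiv s hs).continuousAt.continuousWithinAt)
      (fun s hs => (hderiv s (interior_subset hs)).hasDerivWithinAt)
      fun s hs => mul_nonneg (exp_nonneg _) (sub_nonneg.mpr (hle s (interior_subset hs)))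
  have := hmono self_mem_Ici ht ht
  simp only [mul_zero, neg_zero, exp_zero, one_mul] at this
  calc exp (μ * t) * g 0 ≤ exp (μ * t) * (exp (-(μ * t)) * g t) := by gcongr
    _ = g t := by rw [← mul_assoc, ← exp_add, add_neg_cancel, exp_zero, one_mul]

/-- Finite-dimensional stability lemma: if a symmetric matrix with nonnegative off-diagonal
entries admits a strictly positive, bounded solution of `φ' = Aφ` on `[0,∞)`, then all
eigenvalues of `A` are at most `0`. -/
theorem stmt_10 (n : ℕ) (A : Matrix (Fin n) (Fin n) ℝ) (hA : A.IsSymm)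
    (hoff : ∀ i j, i ≠ j → 0 ≤ A i j)
    (φ : ℝ → (Fin n → ℝ))
    (hode : ∀ t ≥ (0:ℝ), HasDerivAt φ (A.mulVec (φ t)) t)
    (hpos : ∀ t ≥ (0:ℝ), ∀ i, 0 < φ t i)
    (hbdd : ∃ M : ℝ, ∀ t ≥ (0:ℝ), ‖φ t‖ ≤ M) :
    ∀ (μ : ℝ) (v : Fin n → ℝ), v ≠ 0 → A.mulVec v = μ • v → μ ≤ 0 := by
  intro μ v hv hev
  by_contra! hμ
  obtain ⟨M, hM⟩ := hbdd
  set g : ℝ → ℝ := fun t => φ t ⬝ᵥ |v|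
  have hderiv : ∀ t ≥ 0, HasDerivAt g (φ t ⬝ᵥ (A *ᵥ |v|)) t := fun t ht => by
    simpa only [dotProduct_mulVec, ← mulVec_transpose, hA.eq] using
      (hode t ht).dotProduct_const |v|
  have hsub : ∀ t ≥ 0, μ * g t ≤ φ t ⬝ᵥ (A *ᵥ |v|) := fun t ht => by
    rw [← smul_eq_mul, ← dotProduct_smul]
    exact dotProduct_le_dotProduct_of_nonneg_left (smul_abs_le_mulVec_abs hoff hev)
      fun i => (hpos t ht i).le
  have hg0 : 0 < g 0 := by
    obtain ⟨i, hi⟩ := Function.ne_iff.mp hv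
    exact Finset.sum_pos' (fun j _ => mul_nonneg (hpos 0 le_rfl j).le (abs_nonneg _))
      ⟨i, Finset.mem_univ _, mul_pos (hpos 0 le_rfl i) (abs_pos.mpr hi)⟩
  have hgrowth : Tendsto (fun t => exp (μ * t) * g 0) atTop atTop :=
    (tendsto_exp_atTop.comp (tendsto_id.const_mul_atTop hμ)).atTop_mul_const hg0
  obtain ⟨t, hlarge, ht⟩ :=
    ((hgrowth.eventually_gt_atTop (M * ∑ i, |v i|)).and (eventually_ge_atTop 0)).exists
  have hbound : g t ≤ M * ∑ i, |v i| :=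
    (dotProduct_le_norm_mul_sum_abs _ _).trans <| by
      simpa using mul_le_mul_of_nonneg_right (hM t ht) (Finset.sum_nonneg fun i _ => abs_nonneg _)
  exact (exp_mul_mul_le_of_mul_le_deriv hderiv hsub ht).trans hbound |>.not_gt hlarge
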